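/- Let N ≥ 3 be odd and let (S,E) be the cycle of length N, V = F^S, Vbar = V/(F·e_S), pi: V → Vbar the quotient map. For every B in phi(Vbar): M_B ⊆ V_0, e_S is not in M_B, and pi^{−1}(L_B) = M_B ⊕ F·e_S (internal direct sum in V). -/

import Mathlib

/-- The induced subgraph of `adj` on `I` is a path (type `A_m`, `m ≥ 1`):
there is an injective enumeration `f : Fin (m+1) → S` of `I` such that two
elements of `I` are adjacent iff they are consecutive in the enumeration. -/
def IsPathOn {S : Type} [DecidableEq S] (adj : S → S → Prop) (I : Finset S) : Prop :=
  ∃ (m : ℕ) (f : Fin (m + 1) → S), Function.Injective f ∧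
    I = Finset.image f Finset.univ ∧
    ∀ i j : Fin (m + 1), adj (f i) (f j) ↔ ((i : ℕ) + 1 = (j : ℕ) ∨ (j : ℕ) + 1 = (i : ℕ))

/-- The induced subgraph of `adj` on `I` is connected. -/
def ConnOn {S : Type} (adj : S → S → Prop) (I : Finset S) : Prop :=
  ∀ s ∈ I, ∀ t ∈ I, Relation.ReflTransGen (fun a b => a ∈ I ∧ b ∈ I ∧ adj a b) s t

/-- `I ∈ Cal_I^1`: the induced subgraph on `I` is a path and `|I|` is odd. -/
def CalI1 {S : Type} [DecidableEq S] (adj : S → S → Prop) (I : Finset S) : Prop :=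
  IsPathOn adj I ∧ Odd I.card

/-- `I ≺ I'`. -/
def Prec {S : Type} [DecidableEq S] (adj : S → S → Prop) (I I' : Finset S) : Prop :=
  I ⊂ I' ∧ ¬ ConnOn adj (I' \ I)

/-- `I ♠ I'`. -/
def Spade {S : Type} [DecidableEq S] (adj : S → S → Prop) (I I' : Finset S) : Prop :=
  I ∩ I' = ∅ ∧ ¬ ConnOn adj (I ∪ I')

/-- `I^{ev}`: the set of `s ∈ I` such that `I ∖ {s}` is the disjoint union of
`I', I'' ∈ Cal_I^1` with `I' ♠ I''`. -/
def Iev {S : Type} [DecidableEq S] (adj : S → S → Prop) (I : Finset S) : Set S :=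
  {s | s ∈ I ∧ ∃ I' I'' : Finset S, CalI1 adj I' ∧ CalI1 adj I'' ∧
    Spade adj I' I'' ∧ I.erase s = I' ∪ I''}

/-- Property (P0). -/
def P0 {S : Type} [DecidableEq S] (adj : S → S → Prop) (B : Finset (Finset S)) : Prop :=
  ∀ I ∈ B, ∀ I' ∈ B, I = I' ∨ Spade adj I I' ∨ Prec adj I I' ∨ Prec adj I' I

/-- Property (P1). -/
def P1 {S : Type} [DecidableEq S] (adj : S → S → Prop) (B : Finset (Finset S)) : Prop :=
  ∀ I ∈ B, ∃ (k : ℕ) (f : Fin k → Finset S),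
    (∀ j, f j ∈ B ∧ Prec adj (f j) I) ∧
    (∀ j j', j ≠ j' → Disjoint (f j) (f j')) ∧
    Iev adj I ⊆ ⋃ j, ((f j : Finset S) : Set S)

/-- `phi`: finite sets `B` of elements of `Cal_I^1` satisfying (P0) and (P1). -/
def phiSet {S : Type} [DecidableEq S] (adj : S → S → Prop) : Set (Finset (Finset S)) :=
  {B | (∀ I ∈ B, CalI1 adj I) ∧ P0 adj B ∧ P1 adj B}

/-- `supp(B)`. -/
def suppB {S : Type} [DecidableEq S] (B : Finset (Finset S)) : Finset S := B.biUnion id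

/-- `g_s(B)`. -/
def gs {S : Type} [DecidableEq S] (B : Finset (Finset S)) (s : S) : ℕ :=
  (B.filter (fun I => s ∈ I)).card

/-- `e_I = ∑_{s ∈ I} e_s`. -/
def eSum {S : Type} {V : Type} [AddCommGroup V] [Module (ZMod 2) V]
    (e : S → V) (I : Finset S) : V := ∑ s ∈ I, e s

/-- `L_B`: the `F`-span of `{e_I : I ∈ B}`. -/
def LB {S : Type} {V : Type} [AddCommGroup V] [Module (ZMod 2) V]
    (e : S → V) (B : Finset (Finset S)) : Submodule (ZMod 2) V :=
  Submodule.span (ZMod 2) ((fun I => eSum e I) '' (B : Set (Finset S)))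

/-- `eps(B) = ∑_{s ∈ S} ((g_s(B)(g_s(B)+1)/2) mod 2) e_s`. -/
def epsB {S : Type} [DecidableEq S] [Fintype S] {V : Type} [AddCommGroup V]
    [Module (ZMod 2) V] (e : S → V) (B : Finset (Finset S)) : V :=
  ∑ s : S, ((gs B s * (gs B s + 1) / 2 : ℕ) : ZMod 2) • e s

/-- The triple `(V, <,>, e)` (with graph `adj`) is perfect. -/
def IsPerfect {S : Type} [DecidableEq S] [Fintype S] {V : Type} [AddCommGroup V]
    [Module (ZMod 2) V] (adj : S → S → Prop) (e : S → V) : Prop :=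
  (∀ B ∈ phiSet adj,
      (LinearIndependent (ZMod 2) (fun I : {I : Finset S // I ∈ B} => eSum e I.1)) ∧
      (∀ I : Finset S, CalI1 adj I → (eSum e I ∈ LB e B ↔ I ∈ B))) ∧
  (∀ B ∈ phiSet adj, epsB e B ∈ LB e B) ∧
  Set.BijOn (epsB e) (phiSet adj) (⋃ B ∈ phiSet adj, ((LB e B : Submodule (ZMod 2) V) : Set V)) ∧
  (∀ B ∈ phiSet adj, ∀ B' ∈ phiSet adj, epsB e B' ∈ LB e B → ∀ s : S, gs B' s ≤ gs B s)
/-- Adjacency of the cycle of length `N` on `S = ZMod N`. -/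
def cadj (N : ℕ) (i j : ZMod N) : Prop := j = i + 1 ∨ i = j + 1

/-- `V = F^S` for `S = ZMod N`. -/
abbrev Vc (N : ℕ) := ZMod N → ZMod 2

/-- The standard basis vector `e_s`. -/
def eVec (N : ℕ) (s : ZMod N) : Vc N := Pi.single s 1

/-- The line `F·e_S`, where `e_S = ∑_{s ∈ S} e_s`. -/
def radN (N : ℕ) [NeZero N] : Submodule (ZMod 2) (Vc N) :=
  Submodule.span (ZMod 2) {eSum (eVec N) Finset.univ}

/-- `Vbar = V / (F·e_S)`. -/
abbrev VbarN (N : ℕ) [NeZero N] := Vc N ⧸ radN N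

/-- The quotient map `pi : V → Vbar`. -/
def piQ (N : ℕ) [NeZero N] : Vc N →ₗ[ZMod 2] VbarN N := (radN N).mkQ

/-- `ebar_s = pi(e_s)`. -/
def ebar (N : ℕ) [NeZero N] (s : ZMod N) : VbarN N := piQ N (eVec N s)
open scoped Classical in
/-- The connected component of `s` in the induced subgraph of `adj` on `I`. -/
noncomputable def compOf {S : Type} [DecidableEq S] (adj : S → S → Prop)
    (I : Finset S) (s : S) : Finset S :=
  I.filter (fun t => Relation.ReflTransGen (fun a b => a ∈ I ∧ b ∈ I ∧ adj a b) s t)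

/-- `c(I)`: the set of vertex sets of connected components of the induced subgraph on `I`. -/
noncomputable def comps {S : Type} [DecidableEq S] (adj : S → S → Prop)
    (I : Finset S) : Finset (Finset S) :=
  I.image (compOf adj I)

/-- `|c^0(I)|`: the number of connected components of even cardinality. -/
noncomputable def c0card {S : Type} [DecidableEq S] (adj : S → S → Prop)
    (I : Finset S) : ℕ :=
  ((comps adj I).filter (fun C => Even C.card)).card

/-- `V_0 = {e_I : I ⊊ S with |c^0(I)| even}`. -/
def V0set (N : ℕ) [NeZero N] : Set (Vc N) :=
  {v | ∃ I : Finset (ZMod N), I ≠ Finset.univ ∧ Even (c0card (cadj N) I) ∧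
    v = eSum (eVec N) I}

/-- `V_1 = {e_S} ∪ {e_I : ∅ ≠ I ⊊ S with |c^0(I)| odd}`. -/
def V1set (N : ℕ) [NeZero N] : Set (Vc N) :=
  {v | v = eSum (eVec N) Finset.univ ∨ ∃ I : Finset (ZMod N), I ≠ ∅ ∧ I ≠ Finset.univ ∧
    Odd (c0card (cadj N) I) ∧ v = eSum (eVec N) I}
open scoped Classical in
/-- `I^{odd} = I ∖ I^{ev}` (as a `Finset`). -/
noncomputable def IoddF {S : Type} [DecidableEq S] (adj : S → S → Prop)
    (I : Finset S) : Finset S :=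
  I.filter (fun s => s ∉ Iev adj I)

/-- `n_B = |{I ∈ B : ee ⊆ I}|`. -/
def nB {S : Type} [DecidableEq S] (ee : Finset S) (B : Finset (Finset S)) : ℕ :=
  (B.filter (fun I => ee ⊆ I)).card

open scoped Classical in
/-- `B ↦ B^!`: remove the unique `I_B ∈ B` with `|I_B ∩ ee| = 1` when `n_B` is odd;
leave `B` unchanged when `n_B` is even. -/
noncomputable def bangF {S : Type} [DecidableEq S] (ee : Finset S)
    (B : Finset (Finset S)) : Finset (Finset S) :=
  if h : Odd (nB ee B) ∧ ∃ I ∈ B, (I ∩ ee).card = 1 then B.erase h.2.choose else B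

/-- `omega = {B^! : B ∈ phi}`. -/
def omegaSet {S : Type} [DecidableEq S] (adj : S → S → Prop) (ee : Finset S) :
    Set (Finset (Finset S)) :=
  (bangF ee) '' (phiSet adj)

open scoped Classical in
/-- `Btilde`: the unique element of `phi` with `Btilde^! = B`. -/
noncomputable def tildeF {S : Type} [DecidableEq S] (adj : S → S → Prop) (ee : Finset S)
    (C : Finset (Finset S)) : Finset (Finset S) :=
  if h : ∃ B ∈ phiSet adj, bangF ee B = C then h.choose else ∅

/-- `'eps(B) = eps(Btilde)`. -/
noncomputable def epsO {S : Type} [DecidableEq S] [Fintype S] {V : Type} [AddCommGroup V]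
    [Module (ZMod 2) V] (adj : S → S → Prop) (ee : Finset S) (e : S → V)
    (C : Finset (Finset S)) : V :=
  epsB e (tildeF adj ee C)

/-- `B' ⪯ B` on `omega`. -/
def preceqO {S : Type} [DecidableEq S] [Fintype S] {V : Type} [AddCommGroup V]
    [Module (ZMod 2) V] (adj : S → S → Prop) (ee : Finset S) (e : S → V)
    (B' B : Finset (Finset S)) : Prop :=
  ∃ (k : ℕ) (c : ℕ → Finset (Finset S)), c 0 = B' ∧ c k = B ∧
    (∀ i ≤ k, c i ∈ omegaSet adj ee) ∧
    (∀ i < k, epsO adj ee e (c i) ∈ LB e (c (i + 1)))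

/-- The linear form `v ↦ v t + v t'` on `V`. -/
def zeeV (N : ℕ) (t t' : ZMod N) : Vc N →ₗ[ZMod 2] ZMod 2 :=
  (LinearMap.proj t : Vc N →ₗ[ZMod 2] ZMod 2) + (LinearMap.proj t' : Vc N →ₗ[ZMod 2] ZMod 2)

/-- `z_ee : Vbar → F`, the linear map with `z_ee(ebar_s) = 1` iff `s ∈ ee = {t,t'}`. -/
noncomputable def zee (N : ℕ) [NeZero N] (t t' : ZMod N) : VbarN N →ₗ[ZMod 2] ZMod 2 :=
  Submodule.liftQ (radN N) (zeeV N t t') (by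
    rw [radN, Submodule.span_le, Set.singleton_subset_iff]
    have h1 : ∀ u : ZMod N, (eSum (eVec N) Finset.univ) u = 1 := by
      intro u
      simp [eSum, eVec, Finset.sum_apply, Finset.sum_pi_single]
    simp only [SetLike.mem_coe, LinearMap.mem_ker, zeeV, LinearMap.add_apply,
      LinearMap.proj_apply, h1]
    decide)
/-- The maximal elements of a finite family of finsets, under inclusion. -/
def maxElts {S : Type} [DecidableEq S] (C : Finset (Finset S)) : Finset (Finset S) :=
  C.filter (fun I => ∀ I' ∈ C, ¬ I ⊂ I')

/-- `restB B k = B ∖ (B_1 ∪ … ∪ B_k)`: what remains of `B` after removing the first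
`k` layers; the `k`-th layer (`k ≥ 1`) is `B_k = maxElts (restB B (k-1))`. -/
def restB {S : Type} [DecidableEq S] (B : Finset (Finset S)) : ℕ → Finset (Finset S)
  | 0 => B
  | k + 1 => restB B k \ maxElts (restB B k)

/-- The relation `B' ≤ B` on `phi(V)`. -/
def lePhi {S : Type} [DecidableEq S] [Fintype S] {V : Type} [AddCommGroup V]
    [Module (ZMod 2) V] (adj : S → S → Prop) (e : S → V)
    (B' B : Finset (Finset S)) : Prop :=
  ∃ (k : ℕ) (c : ℕ → Finset (Finset S)), c 0 = B' ∧ c k = B ∧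
    (∀ i ≤ k, c i ∈ phiSet adj) ∧
    (∀ i < k, epsB e (c i) ∈ LB e (c (i + 1)))

/-!
The map `q v = ∑ₛ v s * v (s + 1)` is a quadratic form on `V` whose polar form is `⟨·,·⟩`;
`q (e_J)` counts mod 2 the edges of the cycle inside `J`. Every `I ∈ Cal_I^1` is an arc of
odd length `< N`, so `q (e_I) = 0`, and `⟨e_I, v⟩` only sees the values of `v` at the two ends
of `I` and just outside them: for `I ♠ I'` all four points lie outside `I'`, for `I ≺ I'` all
four lie in `I'`. Hence `q` vanishes on `M_B`. For `J ≠ S` the components of `J` are arcs, a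
component `C` contributing `|C| - 1` edges, so `q (e_J) ≡ |c^0(J)|`, whereas `q (e_S) = N` is
odd. This gives `M_B ⊆ V_0` and `e_S ∉ M_B`; the rest is linear algebra, as `ker π = F·e_S`.
-/

open Finset QuadraticMap

namespace QuadraticMap

variable {R M P : Type*} [CommRing R] [AddCommGroup M] [Module R M] [AddCommGroup P] [Module R P]
  {Q : QuadraticMap R M P}

theorem map_sum_of_polar_eq_zero {ι : Type*} [DecidableEq ι] (s : Finset ι) (f : ι → M)
    (h : ∀ i ∈ s, ∀ j ∈ s, i ≠ j → polar Q (f i) (f j) = 0) :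
    Q (∑ i ∈ s, f i) = ∑ i ∈ s, Q (f i) := by
  induction s using Finset.induction_on with
  | empty => simp
  | insert a s ha ih =>
    have hpolar : polar Q (f a) (∑ j ∈ s, f j) = 0 := by
      rw [← polarBilin_apply_apply, map_sum]
      exact Finset.sum_eq_zero fun j hj => h a (by simp) j (by simp [hj]) (by grind)
    rw [Finset.sum_insert ha, Finset.sum_insert ha, QuadraticMap.map_add Q, hpolar, add_zero,
      ih fun i hi j hj => h i (by simp [hi]) j (by simp [hj])]

theorem polar_eq_zero_of_mem_span {s : Set M} (h : ∀ x ∈ s, ∀ y ∈ s, polar Q x y = 0)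
    {x y : M} (hx : x ∈ Submodule.span R s) (hy : y ∈ Submodule.span R s) :
    polar Q x y = 0 := by
  have hleft : ∀ x ∈ s, Submodule.span R s ≤ LinearMap.ker (polarBilin Q x) := fun x hx =>
    Submodule.span_le.mpr fun y hy => h x hx y hy
  have hright : Submodule.span R s ≤ LinearMap.ker ((polarBilin Q).flip y) :=
    Submodule.span_le.mpr fun x' hx' => hleft x' hx' hy
  exact hright hx

theorem eq_zero_of_mem_span {s : Set M} (hQ : ∀ x ∈ s, Q x = 0)
    (h : ∀ x ∈ s, ∀ y ∈ s, polar Q x y = 0) {v : M} (hv : v ∈ Submodule.span R s) :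
    Q v = 0 := by
  induction hv using Submodule.span_induction with
  | mem x hx => exact hQ x hx
  | zero => exact map_zero Q
  | add x y hx hy hQx hQy =>
    rw [QuadraticMap.map_add Q, hQx, hQy, polar_eq_zero_of_mem_span h hx hy, add_zero, add_zero]
  | smul a x _ hQx => rw [QuadraticMap.map_smul, hQx, smul_zero]

end QuadraticMap

section Components

variable {S : Type} [DecidableEq S] {adj : S → S → Prop}

theorem mem_compOf {J : Finset S} {s t : S} :
    t ∈ compOf adj J s ↔
      t ∈ J ∧ Relation.ReflTransGen (fun a b => a ∈ J ∧ b ∈ J ∧ adj a b) s t := by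
  simp [compOf]

theorem compOf_subset (J : Finset S) (s : S) : compOf adj J s ⊆ J :=
  fun _ ht => (mem_compOf.mp ht).1

theorem mem_compOf_self {J : Finset S} {s : S} (hs : s ∈ J) : s ∈ compOf adj J s :=
  mem_compOf.mpr ⟨hs, .refl⟩

theorem compOf_eq_of_mem (hadj : ∀ a b, adj a b → adj b a) {J : Finset S} {s t : S}
    (ht : t ∈ compOf adj J s) : compOf adj J t = compOf adj J s := by
  have : Std.Symm fun a b => a ∈ J ∧ b ∈ J ∧ adj a b :=
    ⟨fun a b h => ⟨h.2.1, h.1, hadj a b h.2.2⟩⟩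
  obtain ⟨-, hst⟩ := mem_compOf.mp ht
  ext x
  rw [mem_compOf, mem_compOf]
  exact and_congr_right fun _ => ⟨hst.trans, (Std.Symm.symm _ _ hst).trans⟩

theorem compOf_eq_of_closed {A J : Finset S} {s : S} (hAJ : A ⊆ J) (hA : ConnOn adj A)
    (hs : s ∈ A) (hclosed : ∀ x ∈ A, ∀ y ∈ J, adj x y → y ∈ A) :
    compOf adj J s = A := by
  ext t
  rw [mem_compOf]
  constructor
  · rintro ⟨-, hst⟩
    induction hst with
    | refl => exact hs
    | tail _ hstep ih => exact hclosed _ ih _ hstep.2.1 hstep.2.2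
  · intro ht
    exact ⟨hAJ ht, Relation.ReflTransGen.mono
      (fun a b hab => ⟨hAJ hab.1, hAJ hab.2.1, hab.2.2⟩) _ _ (hA s hs t ht)⟩

theorem ConnOn.union_of_adj (hadj : ∀ a b, adj a b → adj b a) {I J : Finset S}
    (hI : ConnOn adj I) (hJ : ConnOn adj J) {x y : S} (hx : x ∈ I) (hy : y ∈ J)
    (hxy : adj x y) :
    ConnOn adj (I ∪ J) := by
  set r := fun a b => a ∈ I ∪ J ∧ b ∈ I ∪ J ∧ adj a b
  have : Std.Symm r := ⟨fun a b h => ⟨h.2.1, h.1, hadj a b h.2.2⟩⟩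
  have liftI : ∀ a ∈ I, ∀ b ∈ I, Relation.ReflTransGen r a b := fun a ha b hb =>
    Relation.ReflTransGen.mono
      (fun u v h => ⟨mem_union_left _ h.1, mem_union_left _ h.2.1, h.2.2⟩) _ _ (hI a ha b hb)
  have liftJ : ∀ a ∈ J, ∀ b ∈ J, Relation.ReflTransGen r a b := fun a ha b hb =>
    Relation.ReflTransGen.mono
      (fun u v h => ⟨mem_union_right _ h.1, mem_union_right _ h.2.1, h.2.2⟩) _ _ (hJ a ha b hb)
  have hbridge : Relation.ReflTransGen r x y :=
    .single ⟨mem_union_left _ hx, mem_union_right _ hy, hxy⟩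
  intro s hs t ht
  rcases mem_union.mp hs with hs | hs <;> rcases mem_union.mp ht with ht | ht
  · exact liftI s hs t ht
  · exact ((liftI s hs x hx).trans hbridge).trans (liftJ y hy t ht)
  · exact Std.Symm.symm _ _ (((liftI t ht x hx).trans hbridge).trans (liftJ y hy s hs))
  · exact liftJ s hs t ht

end Components

section Arcs

variable {N : ℕ}

def arc (b : ZMod N) (k : ℕ) : Finset (ZMod N) := (range k).image fun j : ℕ => b + j

theorem mem_arc {b x : ZMod N} {k : ℕ} : x ∈ arc b k ↔ ∃ j < k, b + j = x := by
  simp [arc]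

@[simp]
theorem arc_zero (b : ZMod N) : arc b 0 = ∅ := by
  simp [arc]

theorem mem_arc_self (b : ZMod N) {k : ℕ} (hk : 0 < k) : b ∈ arc b k :=
  mem_arc.mpr ⟨0, hk, by simp⟩

theorem add_sub_one_mem_arc (b : ZMod N) {k : ℕ} (hk : 0 < k) : b + k - 1 ∈ arc b k :=
  mem_arc.mpr ⟨k - 1, by omega, by push_cast [hk]; ring⟩

theorem natCast_inj_of_lt {i j : ℕ} (hi : i < N) (hj : j < N) (h : (i : ZMod N) = j) :
    i = j := by
  rwa [ZMod.natCast_eq_natCast_iff', Nat.mod_eq_of_lt hi, Nat.mod_eq_of_lt hj] at h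

theorem card_arc (b : ZMod N) {k : ℕ} (hk : k ≤ N) : (arc b k).card = k := by
  rw [arc, card_image_of_injOn, card_range]
  intro i hi j hj h
  exact natCast_inj_of_lt ((mem_range.mp hi).trans_le hk) ((mem_range.mp hj).trans_le hk)
    (add_left_cancel h)

theorem arc_add (b : ZMod N) (d e : ℕ) : arc b (d + e) = arc b d ∪ arc (b + d) e := by
  ext x
  simp only [mem_union, mem_arc]
  constructor
  · rintro ⟨j, hj, rfl⟩
    by_cases hjd : j < d
    · exact Or.inl ⟨j, hjd, rfl⟩
    · exact Or.inr ⟨j - d, by omega, by push_cast [Nat.cast_sub (not_lt.mp hjd)]; ring⟩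
  · rintro (⟨j, hj, rfl⟩ | ⟨j, hj, rfl⟩)
    · exact ⟨j, by omega, rfl⟩
    · exact ⟨d + j, by omega, by push_cast; ring⟩

theorem disjoint_arc_add (b : ZMod N) {d e : ℕ} (h : d + e ≤ N) :
    Disjoint (arc b d) (arc (b + d) e) := by
  rw [disjoint_left]
  rintro x hx hx'
  obtain ⟨i, hi, rfl⟩ := mem_arc.mp hx
  obtain ⟨j, hj, hij⟩ := mem_arc.mp hx'
  have : d + j = i := natCast_inj_of_lt (by omega) (by omega)
    (add_left_cancel (a := b) (by push_cast; rw [← hij]; ring))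
  omega

theorem arc_eq_univ [NeZero N] (b : ZMod N) : arc b N = univ := by
  refine eq_univ_of_forall fun x => mem_arc.mpr ⟨(x - b).val, ZMod.val_lt _, ?_⟩
  rw [ZMod.natCast_zmod_val]
  ring

theorem cadj_symm {x y : ZMod N} (h : cadj N x y) : cadj N y x := h.symm

theorem connOn_arc (b : ZMod N) (k : ℕ) : ConnOn (cadj N) (arc b k) := by
  set r := fun x y => x ∈ arc b k ∧ y ∈ arc b k ∧ cadj N x y
  have : Std.Symm r := ⟨fun x y h => ⟨h.2.1, h.1, cadj_symm h.2.2⟩⟩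
  have hfrom : ∀ j < k, Relation.ReflTransGen r b (b + j) := by
    intro j
    induction j with
    | zero => intro; simpa using Relation.ReflTransGen.refl
    | succ j ih =>
      intro hj
      refine (ih (by omega)).tail
        ⟨mem_arc.mpr ⟨j, by omega, rfl⟩, mem_arc.mpr ⟨j + 1, hj, rfl⟩, Or.inl ?_⟩
      push_cast; ring
  intro x hx y hy
  obtain ⟨i, hi, rfl⟩ := mem_arc.mp hx
  obtain ⟨j, hj, rfl⟩ := mem_arc.mp hy
  exact (Std.Symm.symm _ _ (hfrom i hi)).trans (hfrom j hj)

theorem mem_arc_of_cadj {b : ZMod N} {k : ℕ} {J : Finset (ZMod N)} (hb : b - 1 ∉ J)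
    (hbk : b + k ∉ J) {x y : ZMod N} (hx : x ∈ arc b k) (hy : y ∈ J) (hxy : cadj N x y) :
    y ∈ arc b k := by
  obtain ⟨j, hj, rfl⟩ := mem_arc.mp hx
  rcases hxy with rfl | hxy
  · rcases Nat.lt_or_ge (j + 1) k with h | h
    · exact mem_arc.mpr ⟨j + 1, h, by push_cast; ring⟩
    · exact absurd (by rwa [show k = j + 1 by omega, Nat.cast_add_one, ← add_assoc]) hbk
  · rcases Nat.eq_zero_or_pos j with rfl | h
    · have : y = b - 1 := by
        rw [Nat.cast_zero, add_zero] at hxy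
        linear_combination -hxy
      exact absurd (this ▸ hy) hb
    · exact mem_arc.mpr ⟨j - 1, by omega, by push_cast [h]; linear_combination hxy⟩

theorem neighbors_not_mem_of_spade {b : ZMod N} {k : ℕ} (hk : 0 < k) {I : Finset (ZMod N)}
    (hI : ConnOn (cadj N) I) (h : Spade (cadj N) (arc b k) I) :
    b - 1 ∉ I ∧ b ∉ I ∧ b + k - 1 ∉ I ∧ b + k ∉ I := by
  have hfirst := mem_arc_self b hk
  have hlast := add_sub_one_mem_arc b hk
  have hdisj : ∀ x ∈ arc b k, x ∉ I := fun _ hx =>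
    disjoint_left.mp (disjoint_iff_inter_eq_empty.mpr h.1) hx
  refine ⟨fun hI' => h.2 ?_, hdisj b hfirst, hdisj _ hlast, fun hI' => h.2 ?_⟩
  · rw [union_comm]
    exact ConnOn.union_of_adj (fun _ _ => cadj_symm) hI (connOn_arc b k) hI' hfirst (by
      left; ring)
  · exact ConnOn.union_of_adj (fun _ _ => cadj_symm) (connOn_arc b k) hI hlast hI' (by
      left; ring)

theorem exists_eq_add_of_arc_subset {a b : ZMod N} {k k' : ℕ} (hk : 0 < k) (hk' : k' < N)
    (h : arc b k ⊆ arc a k') : ∃ d e : ℕ, b = a + d ∧ k' = d + k + e := by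
  obtain ⟨d, hdk, hd⟩ := mem_arc.mp (h (mem_arc_self b hk))
  have hin : ∀ j < k, d + j < k' := by
    intro j
    induction j with
    | zero => intro; simpa using hdk
    | succ j ih =>
      intro hj
      obtain ⟨i, hi, hi'⟩ := mem_arc.mp (h (mem_arc.mpr ⟨j + 1, hj, rfl⟩))
      have := ih (by omega)
      have : i = d + (j + 1) := natCast_inj_of_lt (by omega) (by omega)
        (add_left_cancel (a := a) (by rw [hi', ← hd]; push_cast; ring))
      omega
  exact ⟨d, k' - d - k, hd.symm, by have := hin (k - 1) (by omega); omega⟩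

theorem neighbors_mem_of_prec {a b : ZMod N} {k k' : ℕ} (hk : 0 < k) (hk' : k' < N)
    (h : Prec (cadj N) (arc b k) (arc a k')) :
    b - 1 ∈ arc a k' ∧ b ∈ arc a k' ∧ b + k - 1 ∈ arc a k' ∧ b + k ∈ arc a k' := by
  obtain ⟨d, e, rfl, rfl⟩ := exists_eq_add_of_arc_subset hk hk' h.1.subset
  have hsplit : arc a (d + k + e) = arc a d ∪ arc (a + d) k ∪ arc (a + d + k) e := by
    rw [arc_add, arc_add, Nat.cast_add, add_assoc]
  refine ⟨?_, h.1.subset (mem_arc_self _ hk), h.1.subset (add_sub_one_mem_arc _ hk), ?_⟩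
  · rcases Nat.eq_zero_or_pos d with rfl | hd
    · refine absurd ?_ h.2
      rw [hsplit, arc_zero, empty_union, Nat.cast_zero, add_zero,
        union_sdiff_cancel_left (disjoint_arc_add a (by omega))]
      exact connOn_arc _ _
    · exact mem_arc.mpr ⟨d - 1, by omega, by push_cast [hd]; ring⟩
  · rcases Nat.eq_zero_or_pos e with rfl | he
    · refine absurd ?_ h.2
      rw [add_zero, arc_add, union_sdiff_cancel_right (disjoint_arc_add a (by omega))]
      exact connOn_arc _ _
    · exact mem_arc.mpr ⟨d + k, by omega, by push_cast; ring⟩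

theorem exists_eq_add_mul_of_steps {g : ℕ → ZMod N} {m : ℕ}
    (hinj : ∀ i ≤ m, ∀ j ≤ m, g i = g j → i = j)
    (hstep : ∀ i < m, g (i + 1) - g i = 1 ∨ g (i + 1) - g i = -1) :
    ∃ d : ZMod N, (d = 1 ∨ d = -1) ∧ ∀ i ≤ m, g i = g 0 + i * d := by
  rcases Nat.eq_zero_or_pos m with rfl | hm
  · exact ⟨1, Or.inl rfl, fun i hi => by simp [Nat.le_zero.mp hi]⟩
  have hsteps : ∀ i < m, g (i + 1) - g i = g 1 - g 0 := by
    intro i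
    induction i with
    | zero => intro; rfl
    | succ i ih =>
      intro hi
      have hback : g (i + 1 + 1) - g (i + 1) ≠ -(g (i + 1) - g i) := fun h => by
        have := hinj (i + 2) (by omega) i (by omega) (by linear_combination h)
        omega
      rw [← ih (by omega)]
      rcases hstep (i + 1) hi with h | h <;> rcases hstep i (by omega) with h' | h' <;>
        rw [h, h'] at hback ⊢ <;> simp at hback ⊢
  refine ⟨g 1 - g 0, by simpa using hstep 0 hm, fun i => ?_⟩
  induction i with
  | zero => simp
  | succ i ih =>
    intro hi
    push_cast
    linear_combination hsteps i hi + ih (by omega)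

theorem exists_eq_arc_of_isPathOn [NeZero N] (hN : 3 ≤ N) {I : Finset (ZMod N)}
    (hI : IsPathOn (cadj N) I) : ∃ b k, 0 < k ∧ k < N ∧ I = arc b k := by
  obtain ⟨m, f, hinj, rfl, hadj⟩ := hI
  set g : ℕ → ZMod N := fun i => f ⟨min i m, by omega⟩
  have hg : ∀ i (hi : i ≤ m), g i = f ⟨i, by omega⟩ := fun i hi => by simp [g, hi]
  obtain ⟨d, hd, hgd⟩ := exists_eq_add_mul_of_steps (g := g) (m := m)
    (fun i hi j hj h => by
      have : f ⟨i, by omega⟩ = f ⟨j, by omega⟩ := by rwa [← hg i hi, ← hg j hj]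
      simpa using congrArg Fin.val (hinj this))
    (fun i hi => by
      have := (hadj ⟨i, by omega⟩ ⟨i + 1, by omega⟩).mpr (Or.inl rfl)
      rw [← hg i hi.le, ← hg (i + 1) hi] at this
      rcases this with h | h
      · exact Or.inl (by rw [h]; ring)
      · exact Or.inr (by rw [h]; ring))
  have hf : ∀ a : Fin (m + 1), f a = g 0 + (a : ℕ) * d := fun a => by
    rw [← hgd a (by omega), hg a (by omega)]
  have hmN : m + 1 ≤ N := by simpa using Fintype.card_le_of_injective f hinj
  have hmN' : m + 1 ≠ N := by
    intro hmN
    have hlast : cadj N (f 0) (f (Fin.last m)) := by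
      have hm : ((m : ℕ) : ZMod N) = -1 := by
        have : ((m + 1 : ℕ) : ZMod N) = 0 := by rw [hmN]; exact ZMod.natCast_self N
        push_cast at this
        linear_combination this
      rw [hf, hf, Fin.val_last, hm]
      rcases hd with rfl | rfl
      · right; simp
      · left; simp
    have := (hadj _ _).mp hlast
    simp only [Fin.coe_ofNat_eq_mod, Nat.zero_mod, zero_add, Fin.val_last, Nat.add_eq_zero_iff,
      one_ne_zero, and_false, or_false] at this
    omega
  rcases hd with rfl | rfl
  · refine ⟨g 0, m + 1, by omega, by omega, ?_⟩
    ext x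
    simp only [mem_image, mem_univ, true_and, mem_arc, hf, mul_one]
    exact ⟨fun ⟨a, ha⟩ => ⟨a, a.isLt, ha⟩, fun ⟨j, hj, hx⟩ => ⟨⟨j, hj⟩, hx⟩⟩
  · refine ⟨g 0 - m, m + 1, by omega, by omega, ?_⟩
    ext x
    simp only [mem_image, mem_univ, true_and, mem_arc, hf]
    constructor
    · rintro ⟨a, rfl⟩
      exact ⟨m - a, by omega, by push_cast [Nat.cast_sub (Nat.le_of_lt_succ a.isLt)]; ring⟩
    · rintro ⟨j, hj, rfl⟩
      exact ⟨⟨m - j, by omega⟩, by push_cast [Nat.cast_sub (Nat.le_of_lt_succ hj)]; ring⟩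

theorem eSum_eVec_apply (I : Finset (ZMod N)) (t : ZMod N) :
    eSum (eVec N) I t = if t ∈ I then 1 else 0 := by
  simp [eSum, eVec, Finset.sum_apply, Pi.single_apply]

theorem eSum_arc (b : ZMod N) {k : ℕ} (hk : k ≤ N) :
    eSum (eVec N) (arc b k) = ∑ j ∈ range k, eVec N (b + j) := by
  rw [eSum, arc, sum_image]
  intro i hi j hj h
  exact natCast_inj_of_lt ((mem_range.mp hi).trans_le hk) ((mem_range.mp hj).trans_le hk)
    (add_left_cancel h)

theorem sum_range_neighbors (v : Vc N) (b : ZMod N) (k : ℕ) :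
    ∑ j ∈ range k, (v (b + j + 1) + v (b + j - 1))
      = v (b - 1) + v b + v (b + k - 1) + v (b + k) := by
  have h2 : (2 : ZMod 2) = 0 := rfl
  induction k with
  | zero =>
    simp only [sum_range_zero, Nat.cast_zero, add_zero]
    linear_combination -(v (b - 1) + v b) * h2
  | succ k ih =>
    rw [sum_range_succ, ih, show b + ((k + 1 : ℕ) : ZMod N) - 1 = b + k by push_cast; ring,
      show b + ((k + 1 : ℕ) : ZMod N) = b + k + 1 by push_cast; ring]
    linear_combination v (b + k - 1) * h2

end Arcs

section EdgeForm

variable {N : ℕ} [NeZero N]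

def edgeBilin (N : ℕ) [NeZero N] : LinearMap.BilinForm (ZMod 2) (Vc N) :=
  LinearMap.mk₂ (ZMod 2) (fun u v => ∑ s, u s * v (s + 1))
    (fun u u' v => by simp [add_mul, sum_add_distrib])
    (fun a u v => by simp [mul_sum, mul_assoc])
    (fun u v v' => by simp [mul_add, sum_add_distrib])
    (fun a u v => by simp [mul_sum, mul_left_comm])

def edgeQuadratic (N : ℕ) [NeZero N] : QuadraticForm (ZMod 2) (Vc N) :=
  (edgeBilin N).toQuadraticMap

theorem edgeQuadratic_eSum (J : Finset (ZMod N)) :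
    edgeQuadratic N (eSum (eVec N) J) = #(J.filter (· + 1 ∈ J)) := by
  simp only [edgeQuadratic, LinearMap.BilinMap.toQuadraticMap_apply, edgeBilin,
    LinearMap.mk₂_apply, eSum_eVec_apply, ite_zero_mul_ite_zero, mul_one, sum_boole]
  congr 2
  ext
  simp

theorem polar_edgeQuadratic_eVec (s : ZMod N) (v : Vc N) :
    polar (edgeQuadratic N) (eVec N s) v = v (s + 1) + v (s - 1) := by
  rw [edgeQuadratic, LinearMap.BilinMap.polar_toQuadraticMap]
  simp [edgeBilin, eVec, Pi.single_apply, ← eq_sub_iff_add_eq]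

theorem polar_edgeQuadratic_eSum_arc (b : ZMod N) {k : ℕ} (hk : k ≤ N) (v : Vc N) :
    polar (edgeQuadratic N) (eSum (eVec N) (arc b k)) v
      = v (b - 1) + v b + v (b + k - 1) + v (b + k) := by
  rw [eSum_arc b hk, ← polarBilin_apply_apply, map_sum, LinearMap.sum_apply]
  simp only [polarBilin_apply_apply, polar_edgeQuadratic_eVec]
  exact sum_range_neighbors v b k

theorem edgeQuadratic_eSum_arc (b : ZMod N) {k : ℕ} (hk : k + 1 < N) :
    edgeQuadratic N (eSum (eVec N) (arc b (k + 1))) = k := by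
  rw [edgeQuadratic_eSum]
  suffices h : (arc b (k + 1)).filter (· + 1 ∈ arc b (k + 1)) = arc b k by
    rw [h, card_arc b (by omega)]
  ext x
  simp only [mem_filter, mem_arc]
  constructor
  · rintro ⟨⟨j, hj, rfl⟩, ⟨i, hi, hij⟩⟩
    refine ⟨j, ?_, rfl⟩
    have : i = j + 1 := natCast_inj_of_lt (by omega) (by omega)
      (add_left_cancel (a := b) (by push_cast; rw [hij]; ring))
    omega
  · rintro ⟨j, hj, rfl⟩
    exact ⟨⟨j, by omega, rfl⟩, ⟨j + 1, by omega, by push_cast; ring⟩⟩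

theorem edgeQuadratic_eSum_univ : edgeQuadratic N (eSum (eVec N) univ) = N := by
  simp [edgeQuadratic_eSum]

theorem exists_eSum_eq (v : Vc N) : ∃ J, eSum (eVec N) J = v := by
  refine ⟨univ.filter (v · ≠ 0), funext fun t => ?_⟩
  simp only [eSum_eVec_apply, mem_filter, mem_univ, true_and]
  generalize v t = x
  revert x
  decide

theorem polar_edgeQuadratic_eq_zero_of_mem_phiSet (hN : 3 ≤ N) {B : Finset (Finset (ZMod N))}
    (hB : B ∈ phiSet (cadj N)) {I I' : Finset (ZMod N)} (hI : I ∈ B) (hI' : I' ∈ B) :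
    polar (edgeQuadratic N) (eSum (eVec N) I) (eSum (eVec N) I') = 0 := by
  obtain ⟨b, k, hk, hkN, rfl⟩ := exists_eq_arc_of_isPathOn hN (hB.1 I hI).1
  obtain ⟨a, k', hk', hkN', rfl⟩ := exists_eq_arc_of_isPathOn hN (hB.1 I' hI').1
  rcases hB.2.1 _ hI _ hI' with h | h | h | h
  · rw [h, polar_self]
    exact CharTwo.two_nsmul _
  · obtain ⟨h₁, h₂, h₃, h₄⟩ := neighbors_not_mem_of_spade hk (connOn_arc a k') h
    simp [polar_edgeQuadratic_eSum_arc b hkN.le, eSum_eVec_apply, h₁, h₂, h₃, h₄]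
  · obtain ⟨h₁, h₂, h₃, h₄⟩ := neighbors_mem_of_prec hk hkN' h
    simp [polar_edgeQuadratic_eSum_arc b hkN.le, eSum_eVec_apply, h₁, h₂, h₃, h₄]
    decide
  · obtain ⟨h₁, h₂, h₃, h₄⟩ := neighbors_mem_of_prec hk' hkN h
    simp [polar_comm _ (eSum _ (arc b k)), polar_edgeQuadratic_eSum_arc a hkN'.le,
      eSum_eVec_apply, h₁, h₂, h₃, h₄]
    decide

theorem edgeQuadratic_eq_zero_of_mem_LB (hN : 3 ≤ N) {B : Finset (Finset (ZMod N))}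
    (hB : B ∈ phiSet (cadj N)) {v : Vc N} (hv : v ∈ LB (eVec N) B) : edgeQuadratic N v = 0 := by
  refine eq_zero_of_mem_span ?_ ?_ hv
  · rintro _ ⟨I, hI, rfl⟩
    obtain ⟨b, k, hk, hkN, rfl⟩ := exists_eq_arc_of_isPathOn hN (hB.1 I hI).1
    obtain ⟨j, rfl⟩ := Nat.exists_eq_add_one_of_ne_zero hk.ne'
    have hodd : Odd (j + 1) := card_arc b hkN.le ▸ (hB.1 _ hI).2
    rw [Nat.odd_add_one, Nat.not_odd_iff_even] at hodd
    rw [edgeQuadratic_eSum_arc b hkN, hodd.natCast_zmod_two]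
  · rintro _ ⟨I, hI, rfl⟩ _ ⟨I', hI', rfl⟩
    exact polar_edgeQuadratic_eq_zero_of_mem_phiSet hN hB hI hI'

theorem exists_arc_eq_compOf {J : Finset (ZMod N)} (hJ : J ≠ univ) {s : ZMod N} (hs : s ∈ J) :
    ∃ b k, 0 < k ∧ k < N ∧ compOf (cadj N) J s = arc b k ∧ b - 1 ∉ J ∧ b + k ∉ J := by
  obtain ⟨z, hz⟩ : ∃ z, z ∉ J := by simpa [eq_univ_iff_forall] using hJ
  have hr : ∃ j : ℕ, s + j ∉ J := ⟨(z - s).val, by simpa [ZMod.natCast_zmod_val] using hz⟩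
  have hl : ∃ j : ℕ, s - j ∉ J := ⟨(s - z).val, by simpa [ZMod.natCast_zmod_val] using hz⟩
  have hr0 : 0 < Nat.find hr := (Nat.find_pos hr).mpr (by simpa using hs)
  have hl0 : 0 < Nat.find hl := (Nat.find_pos hl).mpr (by simpa using hs)
  -- `s + r` and `s - l` are the first points outside `J` to the right and to the left of `s`.
  set r := Nat.find hr
  set l := Nat.find hl
  set b : ZMod N := s - l + 1 with hb
  have hsub : arc b (l + r - 1) ⊆ J := by
    intro x hx
    obtain ⟨j, hj, rfl⟩ := mem_arc.mp hx
    rcases Nat.lt_or_ge (j + 1) l with h | h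
    · have := Nat.find_min hl (m := l - (j + 1)) (by omega)
      rw [not_not, Nat.cast_sub h.le] at this
      convert this using 1
      push_cast; ring
    · have := Nat.find_min hr (m := j + 1 - l) (by omega)
      rw [not_not, Nat.cast_sub h] at this
      convert this using 1
      push_cast; ring
  have hleft : b - 1 ∉ J := by simpa [hb] using Nat.find_spec hl
  have hright : b + ((l + r - 1 : ℕ) : ZMod N) ∉ J := by
    convert Nat.find_spec hr using 2
    rw [Nat.cast_sub (by omega)]
    push_cast; ring
  have hkN : l + r - 1 < N := by
    by_contra h
    have hunion := arc_add b N (l + r - 1 - N)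
    rw [Nat.add_sub_cancel' (by omega), arc_eq_univ] at hunion
    exact hJ (eq_univ_of_forall fun x => hsub (hunion ▸ mem_union_left _ (mem_univ x)))
  refine ⟨b, l + r - 1, by omega, hkN, ?_, hleft, hright⟩
  refine compOf_eq_of_closed hsub (connOn_arc _ _) ?_ fun x hx y hy =>
    mem_arc_of_cadj hleft hright hx hy
  exact mem_arc.mpr ⟨l - 1, by omega, by rw [Nat.cast_sub hl0]; push_cast; ring⟩

theorem c0card_cadj_eq_edgeQuadratic {J : Finset (ZMod N)} (hJ : J ≠ univ) :
    (c0card (cadj N) J : ZMod 2) = edgeQuadratic N (eSum (eVec N) J) := by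
  have hcomps : ∀ C ∈ comps (cadj N) J,
      ∃ b k, 0 < k ∧ k < N ∧ C = arc b k ∧ b - 1 ∉ J ∧ b + k ∉ J := by
    intro C hC
    obtain ⟨s, hs, rfl⟩ := mem_image.mp hC
    exact exists_arc_eq_compOf hJ hs
  have hdisj : ∀ C ∈ comps (cadj N) J, ∀ C' ∈ comps (cadj N) J, C ≠ C' →
      Disjoint C C' := by
    intro C hC C' hC' hne
    obtain ⟨s, -, rfl⟩ := mem_image.mp hC
    obtain ⟨s', -, rfl⟩ := mem_image.mp hC'
    refine disjoint_left.mpr fun x hx hx' => hne ?_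
    rw [← compOf_eq_of_mem (fun _ _ => cadj_symm) hx,
      compOf_eq_of_mem (fun _ _ => cadj_symm) hx']
  have hsum : eSum (eVec N) J = ∑ C ∈ comps (cadj N) J, eSum (eVec N) C := by
    refine (sum_image' (eVec N) fun s hs => ?_).symm
    congr 1
    ext x
    simp only [mem_filter]
    exact ⟨fun hx => ⟨compOf_subset J s hx, compOf_eq_of_mem (fun _ _ => cadj_symm) hx⟩,
      fun ⟨hx, hxs⟩ => hxs ▸ mem_compOf_self hx⟩
  rw [hsum, map_sum_of_polar_eq_zero, c0card, ← sum_boole]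
  · refine sum_congr rfl fun C hC => ?_
    obtain ⟨b, k, hk, hkN, rfl, -, -⟩ := hcomps C hC
    obtain ⟨j, rfl⟩ := Nat.exists_eq_add_one_of_ne_zero hk.ne'
    simp only [edgeQuadratic_eSum_arc b hkN, card_arc b hkN.le, Nat.even_add_one]
    rcases Nat.even_or_odd j with h | h
    · simp [h, h.natCast_zmod_two]
    · simp [Nat.not_even_iff_odd.mpr h, h.natCast_zmod_two]
  · intro C hC C' hC' hne
    obtain ⟨b, k, hk, hkN, rfl, hb, hbk⟩ := hcomps C hC
    have hC'J : C' ⊆ J := by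
      obtain ⟨s, -, rfl⟩ := mem_image.mp hC'
      exact compOf_subset J s
    have hout : ∀ x ∈ arc b k, x ∉ C' := fun _ hx =>
      disjoint_left.mp (hdisj _ hC _ hC' hne) hx
    have hb' : b - 1 ∉ C' := fun h => hb (hC'J h)
    have hbk' : b + k ∉ C' := fun h => hbk (hC'J h)
    simp [polar_edgeQuadratic_eSum_arc b hkN.le, eSum_eVec_apply, hout b (mem_arc_self b hk),
      hout _ (add_sub_one_mem_arc b hk), hb', hbk']

theorem mem_V0set_of_edgeQuadratic_eq_zero (hodd : Odd N) {v : Vc N}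
    (hv : edgeQuadratic N v = 0) : v ∈ V0set N := by
  obtain ⟨J, rfl⟩ := exists_eSum_eq v
  have hJ : J ≠ univ := by
    rintro rfl
    rw [edgeQuadratic_eSum_univ, hodd.natCast_zmod_two] at hv
    exact one_ne_zero hv
  refine ⟨J, hJ, ?_, rfl⟩
  rw [← ZMod.natCast_eq_zero_iff_even, c0card_cadj_eq_edgeQuadratic hJ, hv]

theorem LB_ebar_eq_map (B : Finset (Finset (ZMod N))) :
    LB (ebar N) B = (LB (eVec N) B).map (piQ N) := by
  rw [LB, LB, Submodule.map_span, ← Set.image_comp]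
  congr 1
  refine Set.image_congr fun I _ => ?_
  simp [eSum, ebar, map_sum]

end EdgeForm

/-- for `B ∈ phi(Vbar)`: `M_B ⊆ V_0`, `e_S ∉ M_B`, and
`pi⁻¹(L_B) = M_B ⊕ F·e_S` (internal direct sum). -/
theorem statement7 (N : ℕ) [NeZero N] (hN : 3 ≤ N) (hodd : Odd N)
    (B : Finset (Finset (ZMod N))) (hB : B ∈ phiSet (cadj N)) :
    ((LB (eVec N) B : Submodule (ZMod 2) (Vc N)) : Set (Vc N)) ⊆ V0set N ∧
    eSum (eVec N) Finset.univ ∉ LB (eVec N) B ∧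
    Submodule.comap (piQ N) (LB (ebar N) B) = LB (eVec N) B ⊔ radN N ∧
    Disjoint (LB (eVec N) B) (radN N) := by
  have hQ : ∀ v ∈ LB (eVec N) B, edgeQuadratic N v = 0 := fun v hv =>
    edgeQuadratic_eq_zero_of_mem_LB hN hB hv
  have hS : eSum (eVec N) univ ∉ LB (eVec N) B := fun h => by
    simpa [edgeQuadratic_eSum_univ, hodd.natCast_zmod_two] using hQ _ h
  refine ⟨fun v hv => mem_V0set_of_edgeQuadratic_eq_zero hodd (hQ v hv), hS, ?_, ?_⟩
  · rw [LB_ebar_eq_map, Submodule.comap_map_eq, piQ, Submodule.ker_mkQ]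
  · rw [radN, Submodule.disjoint_span_singleton]
    exact fun h => (hS h).elim
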